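/- Let A ∈ ℝ^{n×n}, B ∈ ℝ^{n×m}, C ∈ ℝ^{m×n}, D ∈ ℝ^{m×m} be such that Q(z) = C(zI−A)⁻¹B + D is all-pass. Then there exist k ∈ ℕ, integers p₁, …, p_k with 0 < pᵢ ≤ m, orthogonal matrices U₁, …, U_k ∈ ℝ^{m×m}, and matrices B′ ∈ ℝ^{n×m}, D′ ∈ ℝ^{m×m} with D′ invertible, such that Q₀(z) := C(zI−A)⁻¹B′ + D′ is all-pass and for every real z ≠ 0 with zI−A invertible, Q(z) = Q₀(z) · ∏_{i=1}^{k} ( diag(I_{m−pᵢ}, z⁻¹ I_{pᵢ}) Uᵢ ). -/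

import Mathlib

open Matrix

noncomputable section

/-- The pair `(A,B)` is reachable: the columns of `B, AB, …, A^{N-1}B` span the state space. -/
def Reachable {N M : Type*} [Fintype N] [DecidableEq N] [Fintype M]
    (A : Matrix N N ℝ) (B : Matrix N M ℝ) : Prop :=
  Submodule.span ℝ
    {v : N → ℝ | ∃ k < Fintype.card N, ∃ j : M, v = (A ^ k) *ᵥ (fun i => B i j)} = ⊤

/-- The pair `(A,C)` is observable: `⋂_{k<N} ker (C A^k) = {0}`. -/
def Observable {N M : Type*} [Fintype N] [DecidableEq N] [Fintype M]
    (A : Matrix N N ℝ) (C : Matrix M N ℝ) : Prop :=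
  ∀ v : N → ℝ, (∀ k < Fintype.card N, (C * A ^ k) *ᵥ v = 0) → v = 0

/-- The transfer function `z ↦ C (zI - A)⁻¹ B + D` is all-pass: for every real `z ≠ 0`
with `zI - A` and `z⁻¹I - Aᵀ` invertible,
`(C(zI−A)⁻¹B + D) (Bᵀ(z⁻¹I−Aᵀ)⁻¹Cᵀ + Dᵀ) = I`. -/
def AllPass {N M : Type*} [Fintype N] [DecidableEq N] [Fintype M] [DecidableEq M]
    (A : Matrix N N ℝ) (B : Matrix N M ℝ) (C : Matrix M N ℝ) (D : Matrix M M ℝ) : Prop :=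
  ∀ z : ℝ, z ≠ 0 → IsUnit (z • (1 : Matrix N N ℝ) - A) →
    IsUnit (z⁻¹ • (1 : Matrix N N ℝ) - Aᵀ) →
    (C * (z • (1 : Matrix N N ℝ) - A)⁻¹ * B + D) *
      (Bᵀ * (z⁻¹ • (1 : Matrix N N ℝ) - Aᵀ)⁻¹ * Cᵀ + Dᵀ) = 1

/-!
If `D` is singular, choose an orthogonal `V` whose last column lies in `ker D`. Writing
`z (zI - A)⁻¹ = I + (zI - A)⁻¹ A` shows that `Q₁(z) = Q(z) V diag(I, z)` is again realized with
the same `A` and `C`; it is all-pass because `diag(I, z) diag(I, z⁻¹) = I`, and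
`Q(z) = Q₁(z) diag(I, z⁻¹) Vᵀ`. The determinant of the Rosenbrock system matrix
`[[zI - A, B], [-C, D]]`, which is `det (zI - A) · det Q(z)`, is a nonzero polynomial for an
all-pass system, of degree at most `n + m`, and each step multiplies it by `c z` with `c ≠ 0`.
Hence after finitely many steps `D` becomes invertible.
-/

open Polynomial Filter

section BlockScalar

variable {K κ : Type*} [DecidableEq κ] (keep : κ → Prop) [DecidablePred keep]

def blockScalar [Zero K] (a b : K) : Matrix κ κ K :=
  diagonal fun j => if keep j then a else b

theorem blockScalar_transpose [Zero K] (a b : K) : (blockScalar keep a b)ᵀ = blockScalar keep a b :=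
  diagonal_transpose _

variable [Field K]

theorem blockScalar_one_eq_add_smul (w : K) :
    blockScalar keep 1 w = blockScalar keep 1 0 + w • blockScalar keep 0 1 := by
  ext i j
  by_cases hij : i = j
  · subst hij
    by_cases hi : keep i <;> simp [blockScalar, hi]
  · simp [blockScalar, hij]

variable [Fintype κ]

theorem blockScalar_one_mul_inv {w : K} (hw : w ≠ 0) :
    blockScalar keep 1 w * blockScalar keep 1 w⁻¹ = 1 := by
  rw [blockScalar, blockScalar, diagonal_mul_diagonal, ← diagonal_one]
  congr 1 with j
  split_ifs <;> simp [hw]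

theorem det_blockScalar_one (w : K) :
    (blockScalar keep 1 w).det = w ^ (Finset.univ.filter fun j => ¬keep j).card := by
  rw [blockScalar, det_diagonal, Finset.prod_ite]
  simp

end BlockScalar

section Transfer

variable {K ι κ μ ν : Type*} [Field K] [Fintype ι] [DecidableEq ι]

def transfer (A : Matrix ι ι K) (B : Matrix ι μ K) (C : Matrix κ ι K) (D : Matrix κ μ K) (z : K) :
    Matrix κ μ K :=
  C * (z • 1 - A)⁻¹ * B + D

variable (A : Matrix ι ι K) (B : Matrix ι μ K) (C : Matrix κ ι K) (D : Matrix κ μ K)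

theorem transfer_transpose (z : K) : (transfer A B C D z)ᵀ = transfer Aᵀ Cᵀ Bᵀ Dᵀ z := by
  simp [transfer, transpose_nonsing_inv, Matrix.mul_assoc]

theorem transfer_mul_add_smul [Fintype μ] {z : K} (hz : IsUnit (z • (1 : Matrix ι ι K) - A))
    (V₀ V₁ : Matrix μ ν K) (hDV : D * V₁ = 0) :
    transfer A B C D z * (V₀ + z • V₁) =
      transfer A (B * V₀ + A * B * V₁) C (D * V₀ + C * B * V₁) z := by
  have hres : z • (C * ((z • 1 - A)⁻¹ * (B * V₁))) =
      C * (B * V₁) + C * ((z • 1 - A)⁻¹ * (A * (B * V₁))) := by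
    have hsplit : z • (B * V₁) = (z • 1 - A) * (B * V₁) + A * (B * V₁) := by
      rw [Matrix.sub_mul, Matrix.smul_mul, Matrix.one_mul, sub_add_cancel]
    rw [← Matrix.mul_smul, ← Matrix.mul_smul, hsplit, Matrix.mul_add,
      ← Matrix.mul_assoc _ (z • 1 - A), nonsing_inv_mul _ ((isUnit_iff_isUnit_det _).mp hz),
      Matrix.one_mul, Matrix.mul_add]
  simp only [transfer, Matrix.add_mul, Matrix.mul_add, Matrix.mul_assoc, Matrix.mul_smul, hDV,
    add_zero, hres]
  abel

end Transfer

theorem eventually_cofinite_isUnit_smul_one_sub {K ι : Type*} [Field K] [Fintype ι]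
    [DecidableEq ι] (A : Matrix ι ι K) :
    ∀ᶠ z : K in cofinite, IsUnit (z • (1 : Matrix ι ι K) - A) := by
  refine eventually_cofinite.mpr ((finite_setOfPred_isRoot A.charpoly_monic.ne_zero).subset ?_)
  intro z hz
  rw [Set.mem_ofPred_eq, isUnit_iff_isUnit_det, isUnit_iff_ne_zero, not_not] at hz
  rw [Set.mem_ofPred_eq, IsRoot, eval_charpoly, scalar_apply, ← smul_one_eq_diagonal, hz]

section Rosenbrock

variable {K ι κ : Type*} [Field K] [Fintype ι] [DecidableEq ι] [Fintype κ] [DecidableEq κ]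

/-- The Rosenbrock system matrix `[[X I - A, B], [-C, D]]`. -/
def rosenbrock (A : Matrix ι ι K) (B : Matrix ι κ K) (C : Matrix κ ι K) (D : Matrix κ κ K) :
    Matrix (ι ⊕ κ) (ι ⊕ κ) K[X] :=
  (X : K[X]) • (fromBlocks 1 0 0 0 : Matrix (ι ⊕ κ) (ι ⊕ κ) K).map Polynomial.C +
    (fromBlocks (-A) B (-C) D).map Polynomial.C

variable (A : Matrix ι ι K) (B : Matrix ι κ K) (C : Matrix κ ι K) (D : Matrix κ κ K)

theorem natDegree_det_rosenbrock_le :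
    (rosenbrock A B C D).det.natDegree ≤ Fintype.card ι + Fintype.card κ :=
  (natDegree_det_X_add_C_le _ _).trans_eq Fintype.card_sum

theorem eval_det_rosenbrock {z : K} (hz : IsUnit (z • (1 : Matrix ι ι K) - A)) :
    (rosenbrock A B C D).det.eval z =
      (z • (1 : Matrix ι ι K) - A).det * (transfer A B C D z).det := by
  have hmap : (rosenbrock A B C D).map (eval z) = fromBlocks (z • 1 - A) B (-C) D := by
    ext (i | i) (j | j) <;> simp [rosenbrock, one_apply]
    split_ifs <;> simp [sub_eq_neg_add, add_comm]
  let := hz.invertible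
  rw [← coe_evalRingHom, RingHom.map_det, RingHom.mapMatrix_apply, coe_evalRingHom, hmap,
    det_fromBlocks₁₁, invOf_eq_nonsing_inv, transfer, Matrix.neg_mul, Matrix.neg_mul,
    sub_neg_eq_add, add_comm]

theorem det_rosenbrock_eq_mul_of_transfer_eq_mul [Infinite K] {B' : Matrix ι κ K}
    {D' : Matrix κ κ K} {G : K → Matrix κ κ K} (g : K[X]) (hG : ∀ z, (G z).det = g.eval z)
    (h : ∀ z, IsUnit (z • (1 : Matrix ι ι K) - A) →
      transfer A B' C D' z = transfer A B C D z * G z) :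
    (rosenbrock A B' C D').det = (rosenbrock A B C D).det * g := by
  refine eq_of_infinite_eval_eq _ _ (Set.Infinite.mono (fun z hz => ?_)
    (frequently_cofinite_iff_infinite.mp (eventually_cofinite_isUnit_smul_one_sub A).frequently))
  rw [Set.mem_ofPred_eq, eval_mul, eval_det_rosenbrock _ _ _ _ hz, eval_det_rosenbrock _ _ _ _ hz,
    h z hz, det_mul, hG, mul_assoc]

end Rosenbrock

section AllPass

variable {ι κ : Type*} [Fintype ι] [DecidableEq ι] [Fintype κ] [DecidableEq κ]
  {A : Matrix ι ι ℝ} {B : Matrix ι κ ℝ} {C : Matrix κ ι ℝ} {D : Matrix κ κ ℝ}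

theorem allPass_iff : AllPass A B C D ↔ ∀ z : ℝ, z ≠ 0 → IsUnit (z • (1 : Matrix ι ι ℝ) - A) →
    IsUnit (z⁻¹ • (1 : Matrix ι ι ℝ) - A) → transfer A B C D z * (transfer A B C D z⁻¹)ᵀ = 1 := by
  have hunit (w : ℝ) :
      IsUnit (w • (1 : Matrix ι ι ℝ) - Aᵀ) ↔ IsUnit (w • (1 : Matrix ι ι ℝ) - A) := by
    rw [← isUnit_transpose]
    simp
  simp only [AllPass, transfer_transpose, hunit]
  rfl

theorem AllPass.of_transfer_eq_mul (hap : AllPass A B C D) {B' : Matrix ι κ ℝ}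
    {D' : Matrix κ κ ℝ} {G : ℝ → Matrix κ κ ℝ} (hG : ∀ z ≠ 0, G z * (G z⁻¹)ᵀ = 1)
    (h : ∀ z, IsUnit (z • (1 : Matrix ι ι ℝ) - A) →
      transfer A B' C D' z = transfer A B C D z * G z) :
    AllPass A B' C D' := by
  rw [allPass_iff] at hap ⊢
  intro z hz hA hA'
  rw [h z hA, h z⁻¹ hA', transpose_mul, Matrix.mul_assoc, ← Matrix.mul_assoc (G z), hG z hz,
    Matrix.one_mul, hap z hz hA hA']

theorem AllPass.det_rosenbrock_ne_zero (hap : AllPass A B C D) : (rosenbrock A B C D).det ≠ 0 := by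
  have hreg := eventually_cofinite_isUnit_smul_one_sub A
  obtain ⟨z, hz, hA, hA'⟩ := ((eventually_cofinite_ne 0).and
    (hreg.and (inv_injective.tendsto_cofinite.eventually hreg))).exists
  have hQ : (transfer A B C D z).det ≠ 0 :=
    left_ne_zero_of_mul_eq_one (b := (transfer A B C D z⁻¹)ᵀ.det)
      (by rw [← det_mul, allPass_iff.mp hap z hz hA hA', det_one])
  intro h0
  have heval := eval_det_rosenbrock A B C D hA
  rw [h0, eval_zero] at heval
  exact mul_ne_zero ((isUnit_iff_isUnit_det _).mp hA).ne_zero hQ heval.symm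

end AllPass

theorem exists_orthogonal_mulVec_col_eq_zero {κ : Type*} [Fintype κ] [DecidableEq κ]
    {D : Matrix κ κ ℝ} (hD : ¬IsUnit D) (j₀ : κ) :
    ∃ V : Matrix κ κ ℝ, V * Vᵀ = 1 ∧ D *ᵥ (fun i => V i j₀) = 0 := by
  obtain ⟨v, hv0, hv⟩ := exists_mulVec_eq_zero_iff.mpr
    (by rwa [isUnit_iff_isUnit_det, isUnit_iff_ne_zero, not_not] at hD)
  let u : EuclideanSpace ℝ κ := ‖WithLp.toLp 2 v‖⁻¹ • WithLp.toLp 2 v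
  have hu : Orthonormal ℝ (({j₀} : Set κ).domRestrict fun _ => u) := by
    simp [u, norm_smul, hv0]
  obtain ⟨b, hb⟩ := hu.exists_orthonormalBasis_extension_of_card_eq (by simp)
  refine ⟨(EuclideanSpace.basisFun κ ℝ).toBasis.toMatrix b, (mem_orthogonalGroup_iff κ ℝ).mp
    ((EuclideanSpace.basisFun κ ℝ).toMatrix_orthonormalBasis_mem_orthogonal b), ?_⟩
  have hcol : (fun i => (EuclideanSpace.basisFun κ ℝ).toBasis.toMatrix b i j₀) =
      ‖WithLp.toLp 2 v‖⁻¹ • v := by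
    ext i
    simp [Module.Basis.toMatrix_apply, hb j₀ rfl, u]
  rw [hcol, mulVec_smul, hv, smul_zero]

section Reduction

variable {ι κ : Type*} [Fintype ι] [DecidableEq ι] [Fintype κ] [DecidableEq κ]
  {A : Matrix ι ι ℝ} {B : Matrix ι κ ℝ} {C : Matrix κ ι ℝ} {D : Matrix κ κ ℝ}
  (keep : κ → Prop) [DecidablePred keep]

theorem AllPass.exists_reduction_step (hap : AllPass A B C D) (hD : ¬IsUnit D)
    (hkeep : ∃! j, ¬keep j) :
    ∃ (V : Matrix κ κ ℝ) (B₁ : Matrix ι κ ℝ) (D₁ : Matrix κ κ ℝ), V * Vᵀ = 1 ∧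
      AllPass A B₁ C D₁ ∧
      (∀ z : ℝ, z ≠ 0 → IsUnit (z • (1 : Matrix ι ι ℝ) - A) →
        transfer A B C D z = transfer A B₁ C D₁ z * (blockScalar keep 1 z⁻¹ * Vᵀ)) ∧
      (rosenbrock A B C D).det.natDegree < (rosenbrock A B₁ C D₁).det.natDegree := by
  obtain ⟨j₀, hj₀, hunique⟩ := hkeep
  obtain ⟨V, hV, hker⟩ := exists_orthogonal_mulVec_col_eq_zero hD j₀
  have hDV : D * (V * blockScalar keep 0 1) = 0 := by
    ext i j
    rw [← Matrix.mul_assoc, blockScalar, mul_diagonal]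
    by_cases hj : keep j
    · simp [hj]
    · obtain rfl := hunique j hj
      simpa [hj, mul_apply, mulVec, dotProduct] using congrFun hker i
  let G (z : ℝ) : Matrix κ κ ℝ := V * blockScalar keep 1 z
  have hT (z : ℝ) (hz : IsUnit (z • (1 : Matrix ι ι ℝ) - A)) :
      transfer A (B * (V * blockScalar keep 1 0) + A * B * (V * blockScalar keep 0 1)) C
        (D * (V * blockScalar keep 1 0) + C * B * (V * blockScalar keep 0 1)) z =
      transfer A B C D z * G z := by
    rw [← transfer_mul_add_smul A B C D hz _ _ hDV, ← Matrix.mul_smul, ← Matrix.mul_add,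
      ← blockScalar_one_eq_add_smul]
  have hGinv (z : ℝ) (hz : z ≠ 0) : G z * (blockScalar keep 1 z⁻¹ * Vᵀ) = 1 := by
    rw [Matrix.mul_assoc, ← Matrix.mul_assoc (blockScalar keep 1 z),
      blockScalar_one_mul_inv keep hz, Matrix.one_mul, hV]
  have hdetV : V.det ≠ 0 :=
    left_ne_zero_of_mul_eq_one (b := Vᵀ.det) (by rw [← det_mul, hV, det_one])
  have hcard : (Finset.univ.filter fun j => ¬keep j).card = 1 :=
    Finset.card_eq_one.mpr ⟨j₀, by ext j; simpa using ⟨hunique j, fun h => h ▸ hj₀⟩⟩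
  refine ⟨V, _, _, hV, hap.of_transfer_eq_mul (fun z hz => ?_) hT, fun z hz hA => ?_, ?_⟩
  · rw [transpose_mul, blockScalar_transpose]
    exact hGinv z hz
  · rw [hT z hA, Matrix.mul_assoc, hGinv z hz, Matrix.mul_one]
  · rw [det_rosenbrock_eq_mul_of_transfer_eq_mul A B C D (Polynomial.C V.det * X) (fun z => ?_) hT,
      natDegree_mul hap.det_rosenbrock_ne_zero (by simpa using hdetV), natDegree_C_mul_X _ hdetV]
    · omega
    · simp [G, det_blockScalar_one, hcard]

theorem AllPass.exists_factorization (hkeep : ∃! j, ¬keep j) (hap : AllPass A B C D) :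
    ∃ Us : List (Matrix κ κ ℝ), (∀ U ∈ Us, Uᵀ * U = 1) ∧
      ∃ (B' : Matrix ι κ ℝ) (D' : Matrix κ κ ℝ), IsUnit D' ∧ AllPass A B' C D' ∧
        ∀ z : ℝ, z ≠ 0 → IsUnit (z • (1 : Matrix ι ι ℝ) - A) →
          transfer A B C D z =
            transfer A B' C D' z * (Us.map fun U => blockScalar keep 1 z⁻¹ * U).prod := by
  induction hN : Fintype.card ι + Fintype.card κ - (rosenbrock A B C D).det.natDegree
    using Nat.strong_induction_on generalizing B D with
  | _ N ih =>
  by_cases hD : IsUnit D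
  · exact ⟨[], by simp, B, D, hD, hap, fun z _ _ => by simp⟩
  obtain ⟨V, B₁, D₁, hV, hap₁, hQ, hlt⟩ := hap.exists_reduction_step keep hD hkeep
  obtain ⟨Us, hUs, B', D', hD', hap', hQ'⟩ :=
    ih _ (by have := natDegree_det_rosenbrock_le A B₁ C D₁; omega) hap₁ rfl
  refine ⟨Us ++ [Vᵀ], ?_, B', D', hD', hap', fun z hz hA => ?_⟩
  · simpa [or_imp, forall_and, hV] using hUs
  · rw [hQ z hz hA, hQ' z hz hA, List.map_append, List.prod_append, Matrix.mul_assoc]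
    simp

end Reduction

theorem allpass_extract_biproper_factor
    (n m : ℕ) (A : Matrix (Fin n) (Fin n) ℝ) (B : Matrix (Fin n) (Fin m) ℝ)
    (C : Matrix (Fin m) (Fin n) ℝ) (D : Matrix (Fin m) (Fin m) ℝ)
    (hap : AllPass A B C D) :
    ∃ (k : ℕ) (p : Fin k → ℕ), (∀ i, 0 < p i ∧ p i ≤ m) ∧
    ∃ U : Fin k → Matrix (Fin m) (Fin m) ℝ, (∀ i, (U i)ᵀ * U i = 1) ∧
    ∃ (B' : Matrix (Fin n) (Fin m) ℝ) (D' : Matrix (Fin m) (Fin m) ℝ),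
      IsUnit D' ∧ AllPass A B' C D' ∧
      ∀ z : ℝ, z ≠ 0 → IsUnit (z • (1 : Matrix (Fin n) (Fin n) ℝ) - A) →
        C * (z • (1 : Matrix (Fin n) (Fin n) ℝ) - A)⁻¹ * B + D =
          (C * (z • (1 : Matrix (Fin n) (Fin n) ℝ) - A)⁻¹ * B' + D') *
          (List.ofFn (fun i : Fin k =>
            Matrix.diagonal (fun j : Fin m => if (j : ℕ) < m - p i then (1 : ℝ) else z⁻¹)
              * U i)).prod := by
  obtain _ | m := m
  · exact ⟨0, Fin.elim0, fun i => i.elim0, Fin.elim0, fun i => i.elim0, B, D,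
      isUnit_of_subsingleton D, hap, fun z _ _ => by simp⟩
  obtain ⟨Us, hUs, B', D', hD', hap', hQ⟩ := hap.exists_factorization
    (fun j : Fin (m + 1) => (j : ℕ) < m + 1 - 1)
    ⟨Fin.last m, by simp, fun j hj => Fin.ext (by have := j.isLt; simp at hj ⊢; omega)⟩
  refine ⟨Us.length, fun _ => 1, fun _ => ⟨Nat.one_pos, Nat.le_add_left 1 m⟩, fun i => Us[i],
    fun i => hUs _ (List.getElem_mem _), B', D', hD', hap', fun z hz hA => ?_⟩
  simp only [← List.ofFn_getElem_eq_map] at hQ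
  exact hQ z hz hA
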